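/- arXiv:1612.02352 — 6 statements merged into one kernel-verified Lean document; each statement's English description precedes it below -/
import Mathlib

section
/- Let f : ℝⁿ → ℝ be convex differentiable, Ψ : ℝⁿ → ℝ ∪ {∞} proper lower semicontinuous convex, L > 0, y ∈ ℝⁿ, and let x⁺ = argmin_x [f(y) + ⟨∇f(y), x − y⟩ + (L/2)‖x − y‖² + Ψ(x)]. Suppose the descent condition f(x⁺) ≤ f(y) + ⟨∇f(y), x⁺ − y⟩ + (L/2)‖x⁺ − y‖² holds. Define the composite gradient g_L(y) = L(y − x⁺) and F = f + Ψ. Then F(x⁺) ≤ F(y) − (1/(2L))‖g_L(y)‖². -/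
/-!
The model `x ↦ ⟪∇f y, x - y⟫ + L / 2 * ‖x - y‖ ^ 2 + Ψ x` minimised by `x⁺` is `L`-strongly convex,
so it grows at least quadratically away from its minimiser; evaluated at `y` this gives
`⟪∇f y, x⁺ - y⟫ + L * ‖x⁺ - y‖ ^ 2 + Ψ x⁺ ≤ Ψ y`. Adding the descent condition yields
`F x⁺ ≤ F y - L / 2 * ‖x⁺ - y‖ ^ 2`, and `L / 2 * ‖x⁺ - y‖ ^ 2 = ‖g_L y‖ ^ 2 / (2 * L)`.
-/

open RealInnerProductSpace

open Set Filter Topology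

section NormedSpace

variable {E : Type*} [NormedAddCommGroup E] [NormedSpace ℝ E] {s : Set E} {m : ℝ}

lemma StrongConvexOn.add_convexOn {f g : E → ℝ} (hf : StrongConvexOn s m f)
    (hg : ConvexOn ℝ s g) : StrongConvexOn s m (f + g) := by
  simpa [StrongConvexOn] using hf.add (uniformConvexOn_zero.2 hg)

lemma StrongConvexOn.add_sq_norm_sub_le_of_isMinOn {h : E → ℝ} {x₀ x : E}
    (hh : StrongConvexOn s m h) (hmin : IsMinOn h s x₀) (hx₀ : x₀ ∈ s) (hx : x ∈ s) :
    h x₀ + m / 2 * ‖x - x₀‖ ^ 2 ≤ h x := by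
  have hsegment : ∀ t ∈ Ioo (0 : ℝ) 1, h x₀ + (1 - t) * (m / 2 * ‖x - x₀‖ ^ 2) ≤ h x := by
    rintro t ⟨ht₀, ht₁⟩
    have hconv := hh.2 hx₀ hx (sub_nonneg.2 ht₁.le) ht₀.le (sub_add_cancel 1 t)
    have hle := hmin (hh.1 hx₀ hx (sub_nonneg.2 ht₁.le) ht₀.le (sub_add_cancel 1 t))
    rw [norm_sub_rev] at hconv
    simp only [smul_eq_mul, mem_ofPred_eq] at hconv hle
    have : t * (h x₀ + (1 - t) * (m / 2 * ‖x - x₀‖ ^ 2)) ≤ t * h x := by nlinarith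
    exact le_of_mul_le_mul_left this ht₀
  have hlim : Tendsto (fun t : ℝ ↦ h x₀ + (1 - t) * (m / 2 * ‖x - x₀‖ ^ 2)) (𝓝[>] 0)
      (𝓝 (h x₀ + m / 2 * ‖x - x₀‖ ^ 2)) := by
    refine tendsto_nhdsWithin_of_tendsto_nhds ?_
    have hcont : Continuous fun t : ℝ ↦ h x₀ + (1 - t) * (m / 2 * ‖x - x₀‖ ^ 2) := by fun_prop
    simpa using hcont.tendsto 0
  exact le_of_tendsto hlim (eventually_of_mem (Ioo_mem_nhdsGT one_pos) hsegment)

end NormedSpace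

section InnerProductSpace

variable {E : Type*} [NormedAddCommGroup E] [InnerProductSpace ℝ E]

lemma strongConvexOn_inner_sub_add_sq_norm_sub {s : Set E} (hs : Convex ℝ s) (m : ℝ) (g y : E) :
    StrongConvexOn s m fun x ↦ ⟪g, x - y⟫ + m / 2 * ‖x - y‖ ^ 2 := by
  rw [strongConvexOn_iff_convex]
  have haffine : (fun x ↦ ⟪g, x - y⟫ + m / 2 * ‖x - y‖ ^ 2 - m / 2 * ‖x‖ ^ 2) =
      fun x ↦ innerₛₗ ℝ (g - m • y) x + (m / 2 * ‖y‖ ^ 2 - ⟪g, y⟫) := by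
    ext x
    simp only [innerₛₗ_apply_apply, inner_sub_left, inner_sub_right, real_inner_smul_left,
      norm_sub_sq_real, real_inner_comm x y]
    ring
  rw [haffine]
  exact ((innerₛₗ ℝ (g - m • y)).convexOn hs).add_const _

lemma ConvexOn.inner_sub_add_mul_sq_norm_add_le {Ψ : E → ℝ} (hΨ : ConvexOn ℝ univ Ψ)
    {g y xp : E} {L : ℝ}
    (hmin : ∀ x, ⟪g, xp - y⟫ + L / 2 * ‖xp - y‖ ^ 2 + Ψ xp ≤
      ⟪g, x - y⟫ + L / 2 * ‖x - y‖ ^ 2 + Ψ x) :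
    ⟪g, xp - y⟫ + L * ‖xp - y‖ ^ 2 + Ψ xp ≤ Ψ y := by
  have hgrowth := ((strongConvexOn_inner_sub_add_sq_norm_sub convex_univ L g y).add_convexOn
    hΨ).add_sq_norm_sub_le_of_isMinOn (fun x _ ↦ hmin x) (mem_univ xp) (mem_univ y)
  simp only [Pi.add_apply, sub_self, inner_zero_right, norm_zero, norm_sub_rev y xp] at hgrowth
  linarith

end InnerProductSpace

theorem composite_gradient_descent_rule_general {n : ℕ}
    (f Ψ : EuclideanSpace ℝ (Fin n) → ℝ)
    (hΨconv : ConvexOn ℝ Set.univ Ψ)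
    (L : ℝ) (y xp : EuclideanSpace ℝ (Fin n))
    (hmin : ∀ x, f y + ⟪gradient f y, xp - y⟫ + L / 2 * ‖xp - y‖ ^ 2 + Ψ xp ≤
                 f y + ⟪gradient f y, x - y⟫ + L / 2 * ‖x - y‖ ^ 2 + Ψ x)
    (hdesc : f xp ≤ f y + ⟪gradient f y, xp - y⟫ + L / 2 * ‖xp - y‖ ^ 2) :
    f xp + Ψ xp ≤ (f y + Ψ y) - 1 / (2 * L) * ‖L • (y - xp)‖ ^ 2 := by
  have hprox : ⟪gradient f y, xp - y⟫ + L * ‖xp - y‖ ^ 2 + Ψ xp ≤ Ψ y :=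
    hΨconv.inner_sub_add_mul_sq_norm_add_le fun x ↦ by linarith [hmin x]
  have hgrad : 1 / (2 * L) * ‖L • (y - xp)‖ ^ 2 = L / 2 * ‖xp - y‖ ^ 2 := by
    rw [norm_smul, mul_pow, Real.norm_eq_abs, sq_abs, norm_sub_rev]
    rcases eq_or_ne L 0 with rfl | hL
    · simp
    · field_simp
  linarith

theorem composite_gradient_descent_rule {n : ℕ}
    (f Ψ : EuclideanSpace ℝ (Fin n) → ℝ)
    (hf : Differentiable ℝ f) (hfconv : ConvexOn ℝ Set.univ f)
    (hΨconv : ConvexOn ℝ Set.univ Ψ) (hΨlsc : LowerSemicontinuous Ψ)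
    (L : ℝ) (hL : 0 < L) (y xp : EuclideanSpace ℝ (Fin n))
    (hmin : ∀ x, f y + ⟪gradient f y, xp - y⟫ + L / 2 * ‖xp - y‖ ^ 2 + Ψ xp ≤
                 f y + ⟪gradient f y, x - y⟫ + L / 2 * ‖x - y‖ ^ 2 + Ψ x)
    (hdesc : f xp ≤ f y + ⟪gradient f y, xp - y⟫ + L / 2 * ‖xp - y‖ ^ 2) :
    f xp + Ψ xp ≤ (f y + Ψ y) - 1 / (2 * L) * ‖L • (y - xp)‖ ^ 2 :=
  composite_gradient_descent_rule_general f Ψ hΨconv L y xp hmin hdesc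
end

section
/- Let f : ℝⁿ → ℝ be differentiable and μ-strongly convex (μ ≥ 0), Ψ : ℝⁿ → ℝ ∪ {∞} proper lsc convex, L > 0, y ∈ ℝⁿ, and x⁺ = T_{f,Ψ,L}(y) the proximal gradient step. Assume the descent condition f(x⁺) ≤ f(y) + ⟨∇f(y), x⁺ − y⟩ + (L/2)‖x⁺ − y‖² holds. Then for all x ∈ ℝⁿ, F(x) ≥ F(x⁺) + (1/(2L))‖g_L(y)‖² + ⟨g_L(y), x − y⟩ + (μ/2)‖x − y‖², where g_L(y) = L(y − x⁺) and F = f + Ψ. -/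
/-!
Since `xp` minimises `Ψ` plus the quadratic model of `f` at `y`, and that model is smooth, the
first-order optimality condition makes `-(∇f y + L • (xp - y))` a subgradient of the convex
function `Ψ` at `xp`. Adding this subgradient inequality at `x` to the strong convexity
inequality for `f` between `x` and `y` and to the descent condition at `xp` gives the claim,
after recentring the quadratic terms at `y` with the gradient mapping `L • (y - xp)`.
-/

open RealInnerProductSpace Set

theorem ConvexOn.le_add_of_isMinOn_add {E : Type*} [NormedAddCommGroup E] [NormedSpace ℝ E]
    {s : Set E} {h Ψ : E → ℝ} {h' : E →L[ℝ] ℝ} {a x : E} (hΨ : ConvexOn ℝ s Ψ)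
    (hmin : IsMinOn (h + Ψ) s a) (hh : HasFDerivAt h h' a) (ha : a ∈ s) (hx : x ∈ s) :
    Ψ a ≤ Ψ x + h' (x - a) := by
  -- Along the segment, convexity bounds `Ψ` above by an affine function of `t`.
  set φ : ℝ → ℝ := fun t => h (a + t • (x - a)) + t * (Ψ x - Ψ a)
  have hφ_min : IsMinOn φ (Icc 0 1) 0 := by
    refine isMinOn_iff.2 fun t ⟨ht0, ht1⟩ => ?_
    have hseg : (1 - t) • a + t • x = a + t • (x - a) := by module
    have hconv := hΨ.2 ha hx (by linarith : 0 ≤ 1 - t) ht0 (by ring)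
    have hle := isMinOn_iff.1 hmin _ (hΨ.1 ha hx (by linarith : 0 ≤ 1 - t) ht0 (by ring))
    simp only [Pi.add_apply, smul_eq_mul, hseg] at hconv hle
    simp only [φ, zero_smul, add_zero, zero_mul]
    nlinarith
  have hφ_deriv : HasDerivWithinAt φ (h' (x - a) + (Ψ x - Ψ a)) (Icc 0 1) 0 := by
    have hline : HasDerivAt (fun t : ℝ => a + t • (x - a)) (x - a) 0 := by
      simpa using ((hasDerivAt_id (0 : ℝ)).smul_const (x - a)).const_add a
    have hh0 : HasFDerivAt h h' (a + (0 : ℝ) • (x - a)) := by simpa using hh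
    have := (hh0.comp_hasDerivAt 0 hline).add ((hasDerivAt_id 0).mul_const (Ψ x - Ψ a))
    rw [one_mul] at this
    exact this.hasDerivWithinAt
  have := hφ_min.localize.hasFDerivWithinAt_nonneg hφ_deriv.hasFDerivWithinAt
    (y := 1) (mem_posTangentConeAt_of_segment_subset (by simp [segment_eq_Icc]))
  simp only [ContinuousLinearMap.toSpanSingleton_apply, smul_eq_mul, one_mul] at this
  linarith

theorem hasFDerivAt_inner_sub_add_norm_sub_sq {E : Type*} [NormedAddCommGroup E]
    [InnerProductSpace ℝ E] (c L : ℝ) (g y a : E) :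
    HasFDerivAt (fun z => c + ⟪g, z - y⟫ + L / 2 * ‖z - y‖ ^ 2)
      (innerSL ℝ (g + L • (a - y))) a := by
  have hsub := (hasFDerivAt_id (𝕜 := ℝ) a).sub_const y
  refine ((((innerSL ℝ g).hasFDerivAt.comp a hsub).const_add c).add
    (hsub.norm_sq.const_mul (L / 2))).congr_fderiv ?_
  ext v
  simp only [add_apply, smul_apply,
    ContinuousLinearMap.comp_id, innerSL_apply_apply, inner_add_left, real_inner_smul_left,
    id_eq, nsmul_eq_mul, smul_eq_mul]
  ring

theorem inner_add_smul_sub_eq {E : Type*} [NormedAddCommGroup E] [InnerProductSpace ℝ E]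
    (g u w : E) (L : ℝ) :
    ⟪g + L • u, w - u⟫ =
      ⟪g, w⟫ - ⟪g, u⟫ - 1 / (2 * L) * ‖L • -u‖ ^ 2 - ⟪L • -u, w⟫ - L / 2 * ‖u‖ ^ 2 := by
  have hL : 1 / (2 * L) * L ^ 2 = L / 2 := by
    rcases eq_or_ne L 0 with rfl | hL
    · simp
    · field_simp
  simp only [inner_sub_right, inner_add_left, inner_neg_left, real_inner_smul_left, norm_neg,
    norm_smul, mul_pow, Real.norm_eq_abs, sq_abs, real_inner_self_eq_norm_sq]
  linear_combination (‖u‖ ^ 2) * hL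

theorem relaxed_supporting_generalized_parabola_general {n : ℕ}
    (f Ψ : EuclideanSpace ℝ (Fin n) → ℝ)
    (μ : ℝ)
    (hfsc : ∀ x y, f x ≥ f y + ⟪gradient f y, x - y⟫ + μ / 2 * ‖x - y‖ ^ 2)
    (hΨconv : ConvexOn ℝ Set.univ Ψ)
    (L : ℝ) (y xp : EuclideanSpace ℝ (Fin n))
    (hmin : ∀ x, f y + ⟪gradient f y, xp - y⟫ + L / 2 * ‖xp - y‖ ^ 2 + Ψ xp ≤
                 f y + ⟪gradient f y, x - y⟫ + L / 2 * ‖x - y‖ ^ 2 + Ψ x)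
    (hdesc : f xp ≤ f y + ⟪gradient f y, xp - y⟫ + L / 2 * ‖xp - y‖ ^ 2) :
    ∀ x, f x + Ψ x ≥ (f xp + Ψ xp) + 1 / (2 * L) * ‖L • (y - xp)‖ ^ 2 +
      ⟪L • (y - xp), x - y⟫ + μ / 2 * ‖x - y‖ ^ 2 := by
  intro x
  have hΨ := hΨconv.le_add_of_isMinOn_add (isMinOn_univ_iff.2 hmin)
    (hasFDerivAt_inner_sub_add_norm_sub_sq (f y) L (gradient f y) y xp) (mem_univ xp) (mem_univ x)
  have hparabola := inner_add_smul_sub_eq (gradient f y) (xp - y) (x - y) L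
  rw [sub_sub_sub_cancel_right, neg_sub] at hparabola
  rw [innerSL_apply_apply] at hΨ
  linarith [hfsc x y]

theorem relaxed_supporting_generalized_parabola {n : ℕ}
    (f Ψ : EuclideanSpace ℝ (Fin n) → ℝ)
    (hf : Differentiable ℝ f)
    (μ : ℝ) (hμ : 0 ≤ μ)
    (hfsc : ∀ x y, f x ≥ f y + ⟪gradient f y, x - y⟫ + μ / 2 * ‖x - y‖ ^ 2)
    (hΨconv : ConvexOn ℝ Set.univ Ψ) (hΨlsc : LowerSemicontinuous Ψ)
    (L : ℝ) (hL : 0 < L) (y xp : EuclideanSpace ℝ (Fin n))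
    (hmin : ∀ x, f y + ⟪gradient f y, xp - y⟫ + L / 2 * ‖xp - y‖ ^ 2 + Ψ xp ≤
                 f y + ⟪gradient f y, x - y⟫ + L / 2 * ‖x - y‖ ^ 2 + Ψ x)
    (hdesc : f xp ≤ f y + ⟪gradient f y, xp - y⟫ + L / 2 * ‖xp - y‖ ^ 2) :
    ∀ x, f x + Ψ x ≥ (f xp + Ψ xp) + 1 / (2 * L) * ‖L • (y - xp)‖ ^ 2 +
      ⟪L • (y - xp), x - y⟫ + μ / 2 * ‖x - y‖ ^ 2 :=
  relaxed_supporting_generalized_parabola_general f Ψ μ hfsc hΨconv L y xp hmin hdesc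
end

section
/- Fix real numbers 0 < q_u < 1. Let sequences (A_k), (γ_k), (a_k), (L'_k) of positive reals satisfy γ_k > A_k μ with μ > 0, L'_{k+1} a_{k+1}² = A_{k+1} γ_{k+1}, A_{k+1} = A_k + a_{k+1}, and μ/L'_{k+1} ≥ q_u for all k. Then A_{k+1}/A_k > 1/(1 − sqrt(q_u)) for all k ≥ 1, and consequently A_k ≥ A₁ (1 − sqrt(q_u))^{−(k−1)} for all k ≥ 1. -/
/-!
From `L'_{k+1} a_{k+1}² = A_{k+1} γ_{k+1}`, `γ_{k+1} > A_{k+1} μ` and `μ ≥ q_u L'_{k+1}` we get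
`a_{k+1}² > q_u A_{k+1}²`, i.e. `a_{k+1} > √q_u · A_{k+1}`. Substituting `a_{k+1} = A_{k+1} - A_k`
gives `A_k < (1 - √q_u) A_{k+1}`, and iterating this yields the geometric lower bound.
-/

lemma mul_sq_lt_sq_of_mul_sq_eq {μ q L A a γ : ℝ} (hL : 0 < L) (hA : 0 < A)
    (hγ : A * μ < γ) (hstep : L * a ^ 2 = A * γ) (hq : q ≤ μ / L) :
    q * A ^ 2 < a ^ 2 := by
  have hqL : q * L ≤ μ := (le_div_iff₀ hL).mp hq
  have : q * A ^ 2 * L < a ^ 2 * L := by nlinarith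
  exact lt_of_mul_lt_mul_right this hL.le

lemma Real.sqrt_mul_lt_of_mul_sq_lt {q A a : ℝ} (hA : 0 ≤ A) (ha : 0 < a)
    (h : q * A ^ 2 < a ^ 2) : √q * A < a := by
  rw [← Real.sqrt_sq hA, ← Real.sqrt_mul' q (sq_nonneg A)]
  exact (Real.sqrt_lt' ha).mpr h

lemma div_pow_le_add_of_le_mul {A : ℕ → ℝ} {c : ℝ} (hc : 0 < c) (h : ∀ k, A k ≤ A (k + 1) * c)
    (m : ℕ) : ∀ n, A m / c ^ n ≤ A (m + n)
  | 0 => by simp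
  | n + 1 => by
    calc A m / c ^ (n + 1) = A m / c ^ n / c := by rw [pow_succ, div_div]
      _ ≤ A (m + n) / c := by gcongr; exact div_pow_le_add_of_le_mul hc h m n
      _ ≤ A (m + n + 1) := (div_le_iff₀ hc).mpr (h _)

theorem acgm_weight_lower_bound_strongly_convex_general
    (μ qu : ℝ) (hqu1 : qu < 1)
    (A a γ L' : ℕ → ℝ)
    (hApos : ∀ k, 0 < A k) (hapos : ∀ k, 0 < a k)
    (hLpos : ∀ k, 0 < L' k)
    (hγA : ∀ k, γ k > A k * μ)
    (hstep : ∀ k, L' (k + 1) * a (k + 1) ^ 2 = A (k + 1) * γ (k + 1))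
    (hAacc : ∀ k, A (k + 1) = A k + a (k + 1))
    (hq : ∀ k, μ / L' (k + 1) ≥ qu) :
    (∀ k : ℕ, 1 ≤ k → A (k + 1) / A k > 1 / (1 - Real.sqrt qu)) ∧
    (∀ k : ℕ, 1 ≤ k → A k ≥ A 1 / (1 - Real.sqrt qu) ^ (k - 1)) := by
  have hs : 0 < 1 - √qu := sub_pos.mpr ((Real.sqrt_lt' one_pos).mpr (by simpa using hqu1))
  have hgrowth : ∀ k, A k < A (k + 1) * (1 - √qu) := fun k => by
    have := Real.sqrt_mul_lt_of_mul_sq_lt (hApos (k + 1)).le (hapos (k + 1))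
      (mul_sq_lt_sq_of_mul_sq_eq (hLpos _) (hApos _) (hγA _) (hstep k) (hq k))
    linarith [hAacc k]
  refine ⟨fun k _ => ?_, fun k hk => ?_⟩
  · rw [gt_iff_lt, div_lt_div_iff₀ hs (hApos k)]
    linarith [hgrowth k]
  · obtain ⟨n, rfl⟩ := Nat.exists_eq_add_of_le hk
    simpa using div_pow_le_add_of_le_mul hs (fun k => (hgrowth k).le) 1 n

theorem acgm_weight_lower_bound_strongly_convex
    (μ qu : ℝ) (hμ : 0 < μ) (hqu0 : 0 < qu) (hqu1 : qu < 1)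
    (A a γ L' : ℕ → ℝ)
    (hApos : ∀ k, 0 < A k) (hapos : ∀ k, 0 < a k)
    (hγpos : ∀ k, 0 < γ k) (hLpos : ∀ k, 0 < L' k)
    (hγA : ∀ k, γ k > A k * μ)
    (hstep : ∀ k, L' (k + 1) * a (k + 1) ^ 2 = A (k + 1) * γ (k + 1))
    (hAacc : ∀ k, A (k + 1) = A k + a (k + 1))
    (hq : ∀ k, μ / L' (k + 1) ≥ qu) :
    (∀ k : ℕ, 1 ≤ k → A (k + 1) / A k > 1 / (1 - Real.sqrt qu)) ∧
    (∀ k : ℕ, 1 ≤ k → A k ≥ A 1 / (1 - Real.sqrt qu) ^ (k - 1)) :=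
  acgm_weight_lower_bound_strongly_convex_general μ qu hqu1 A a γ L' hApos hapos hLpos hγA hstep
    hAacc hq
end

section
/- Let γ_k, γ_{k+1}, a_{k+1}, A_k > 0 with A_{k+1} = A_k + a_{k+1}, and let x_k, v_k, x_{k+1} ∈ ℝⁿ. Define y_{k+1} = (A_k γ_{k+1} x_k + a_{k+1} γ_k v_k)/(A_k γ_{k+1} + a_{k+1} γ_k), and suppose γ_{k+1} v_{k+1} = γ_k v_k + a_{k+1}(L+μ_Ψ)x_{k+1} − a_{k+1}(L−μ_f) y_{k+1}, with (L+μ_Ψ)a_{k+1}² = A_{k+1}γ_{k+1} and γ_{k+1} = γ_k + (μ_f+μ_Ψ)a_{k+1}. Then v_{k+1} = x_k + (A_{k+1}/a_{k+1})(x_{k+1} − x_k). -/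
/-!
The coupling `(L + μΨ) a² = A' γ'` together with `γ' = γ + (μf + μΨ) a` and `A' = A + a` turns the
normaliser of `y` into `A γ' + a γ = a² (L - μf)`. Hence `a (L - μf) y = (A γ' / a) x + γ v`, the
`γ v` terms cancel in the update of `v`, and what remains is `γ' v' = γ' ((A'/a) x' - (A/a) x)`.
-/

section

variable {K E : Type*} [Field K] [AddCommGroup E] [Module K E]

theorem acgm_weight_sum_eq {γk γk1 ak1 Ak Ak1 L μf μΨ : K} (hAacc : Ak1 = Ak + ak1)
    (hstep : (L + μΨ) * ak1 ^ 2 = Ak1 * γk1) (hγrec : γk1 = γk + (μf + μΨ) * ak1) :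
    Ak * γk1 + ak1 * γk = ak1 ^ 2 * (L - μf) := by
  linear_combination -hstep - ak1 * hγrec - γk1 * hAacc

theorem acgm_smul_mixing_point {γk γk1 ak1 Ak L μf : K} {xk vk yk1 : E}
    (hak1 : ak1 ≠ 0) (hD : Ak * γk1 + ak1 * γk ≠ 0)
    (hweight : Ak * γk1 + ak1 * γk = ak1 ^ 2 * (L - μf))
    (hy : yk1 = (Ak * γk1 + ak1 * γk)⁻¹ • ((Ak * γk1) • xk + (ak1 * γk) • vk)) :
    (ak1 * (L - μf)) • yk1 = (Ak * γk1 / ak1) • xk + γk • vk := by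
  have hLμ : L - μf ≠ 0 := right_ne_zero_of_mul (hweight ▸ hD)
  rw [hy, hweight]
  match_scalars <;> field_simp

theorem acgm_vertex_eq {γk γk1 ak1 Ak Ak1 L μf μΨ : K} {xk vk xk1 yk1 vk1 : E}
    (hγk1 : γk1 ≠ 0) (hak1 : ak1 ≠ 0) (hD : Ak * γk1 + ak1 * γk ≠ 0)
    (hAacc : Ak1 = Ak + ak1)
    (hy : yk1 = (Ak * γk1 + ak1 * γk)⁻¹ • ((Ak * γk1) • xk + (ak1 * γk) • vk))
    (hv : γk1 • vk1 = γk • vk + (ak1 * (L + μΨ)) • xk1 - (ak1 * (L - μf)) • yk1)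
    (hstep : (L + μΨ) * ak1 ^ 2 = Ak1 * γk1) (hγrec : γk1 = γk + (μf + μΨ) * ak1) :
    vk1 = xk + (Ak1 / ak1) • (xk1 - xk) := by
  have hmix := acgm_smul_mixing_point hak1 hD (acgm_weight_sum_eq hAacc hstep hγrec) hy
  have hscaled : γk1 • vk1 = γk1 • ((Ak1 / ak1) • xk1 - (Ak / ak1) • xk) := by
    rw [hv, hmix]
    match_scalars
    · ring
    · field_simp
      linear_combination hstep
    · ring
  rw [smul_right_injective E hγk1 hscaled]
  match_scalars
  · rfl
  · rw [hAacc]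
    field_simp
    ring

end

theorem acgm_vertex_extrapolation_general {n : ℕ}
    (γk γk1 ak1 Ak Ak1 L μf μΨ : ℝ)
    (hγk : 0 < γk) (hγk1 : 0 < γk1) (hak1 : 0 < ak1) (hAk : 0 < Ak)
    (hAacc : Ak1 = Ak + ak1)
    (xk vk xk1 yk1 vk1 : EuclideanSpace ℝ (Fin n))
    (hy : yk1 = (Ak * γk1 + ak1 * γk)⁻¹ • ((Ak * γk1) • xk + (ak1 * γk) • vk))
    (hv : γk1 • vk1 = γk • vk + (ak1 * (L + μΨ)) • xk1 - (ak1 * (L - μf)) • yk1)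
    (hstep : (L + μΨ) * ak1 ^ 2 = Ak1 * γk1)
    (hγrec : γk1 = γk + (μf + μΨ) * ak1) :
    vk1 = xk + (Ak1 / ak1) • (xk1 - xk) :=
  acgm_vertex_eq hγk1.ne' hak1.ne' (by positivity) hAacc hy hv hstep hγrec

theorem acgm_vertex_extrapolation {n : ℕ}
    (γk γk1 ak1 Ak Ak1 L μf μΨ : ℝ)
    (hγk : 0 < γk) (hγk1 : 0 < γk1) (hak1 : 0 < ak1) (hAk : 0 < Ak)
    (hL : 0 < L) (hμf : 0 ≤ μf) (hμΨ : 0 ≤ μΨ)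
    (hAacc : Ak1 = Ak + ak1)
    (xk vk xk1 yk1 vk1 : EuclideanSpace ℝ (Fin n))
    (hy : yk1 = (Ak * γk1 + ak1 * γk)⁻¹ • ((Ak * γk1) • xk + (ak1 * γk) • vk))
    (hv : γk1 • vk1 = γk • vk + (ak1 * (L + μΨ)) • xk1 - (ak1 * (L - μf)) • yk1)
    (hstep : (L + μΨ) * ak1 ^ 2 = Ak1 * γk1)
    (hγrec : γk1 = γk + (μf + μΨ) * ak1) :
    vk1 = xk + (Ak1 / ak1) • (xk1 - xk) :=
  acgm_vertex_extrapolation_general γk γk1 ak1 Ak Ak1 L μf μΨ hγk hγk1 hak1 hAk hAacc xk vk xk1 yk1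
    vk1 hy hv hstep hγrec
end

section
/- Let 0 < q < 1. Then (1 − q + sqrt(q(1−q)/2)) / (1 + sqrt(q)) < 1. Equivalently, with B_AMGS = (1 + sqrt(q/(2(1−q))))² and B_FGM = (1/(1−sqrt(q)))², one has sqrt(B_AMGS / B_FGM) < 1, i.e., B_AMGS < B_FGM. -/
/-! Write `s = √q ∈ (0, 1)`. The first inequality reduces to `√(q(1-q)/2) < √q + q`, which
holds because `q(1-q)/2 < q`. For the second, `q/(2(1-q)) = s²/(2(1-s)(1+s)) < (s/(1-s))²`
since `1 - s < 2(1 + s)`, and `1 + s/(1-s) = 1/(1-s)`. -/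

open Real

lemma sqrt_mul_one_sub_div_two_lt_sqrt {q : ℝ} (hq : 0 < q) : √(q * (1 - q) / 2) < √q :=
  (sqrt_lt_sqrt_iff_of_pos hq).2 (by nlinarith)

lemma one_sub_add_sqrt_div_one_add_sqrt_lt_one {q : ℝ} (hq : 0 < q) :
    (1 - q + √(q * (1 - q) / 2)) / (1 + √q) < 1 := by
  rw [div_lt_one (by positivity)]
  linarith [sqrt_mul_one_sub_div_two_lt_sqrt hq]

lemma sqrt_div_two_mul_one_sub_lt_sqrt_div_one_sub_sqrt {q : ℝ} (hq0 : 0 < q) (hq1 : q < 1) :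
    √(q / (2 * (1 - q))) < √q / (1 - √q) := by
  set s := √q
  have hs0 : 0 < s := sqrt_pos.2 hq0
  have hs1 : s < 1 := (sqrt_lt' one_pos).2 (by rwa [one_pow])
  have hq : q = s ^ 2 := (sq_sqrt hq0.le).symm
  have h1s : 0 < 1 - s := sub_pos.2 hs1
  rw [sqrt_lt' (div_pos hs0 h1s)]
  calc q / (2 * (1 - q)) = s ^ 2 / (2 * (1 - s) * (1 + s)) := by rw [hq]; ring
    _ < s ^ 2 / ((1 - s) * (1 - s)) :=
        div_lt_div_of_pos_left (by positivity) (by positivity) (by nlinarith)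
    _ = (s / (1 - s)) ^ 2 := by rw [div_pow, sq (1 - s)]

lemma one_add_sqrt_div_two_mul_one_sub_lt_inv_one_sub_sqrt {q : ℝ} (hq0 : 0 < q) (hq1 : q < 1) :
    1 + √(q / (2 * (1 - q))) < 1 / (1 - √q) := by
  have h1s : 1 - √q ≠ 0 := (sub_pos.2 ((sqrt_lt' one_pos).2 (by rwa [one_pow]))).ne'
  calc 1 + √(q / (2 * (1 - q))) < 1 + √q / (1 - √q) := by
        gcongr; exact sqrt_div_two_mul_one_sub_lt_sqrt_div_one_sub_sqrt hq0 hq1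
    _ = 1 / (1 - √q) := by field_simp; ring

theorem fgm_rate_beats_amgs_rate (q : ℝ) (hq0 : 0 < q) (hq1 : q < 1) :
    (1 - q + Real.sqrt (q * (1 - q) / 2)) / (1 + Real.sqrt q) < 1 ∧
    (1 + Real.sqrt (q / (2 * (1 - q)))) ^ 2 < (1 / (1 - Real.sqrt q)) ^ 2 :=
  ⟨one_sub_add_sqrt_div_one_add_sqrt_lt_one hq0,
    pow_lt_pow_left₀ (one_add_sqrt_div_two_mul_one_sub_lt_inv_one_sub_sqrt hq0 hq1)
      (by positivity) two_ne_zero⟩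
end

section
/- Let L_f > 0 and μ = 0, so that q = μ/L_f = 0. Define sequences A_k^ACGM with A₀ = 0, A_{k+1}^ACGM = (sqrt(1/(4L_{k+1})) + sqrt(1/(4L_{k+1}) + A_k^ACGM))², and A_k^FISTA with A₀ = 0, A_{k+1}^FISTA = (sqrt(1/(4M_{k+1})) + sqrt(1/(4M_{k+1}) + (M_k/M_{k+1}) A_k^FISTA))², where 0 < L_k ≤ M_k and M_k ≤ M_{k+1} for all k. Prove A_k^ACGM ≥ A_k^FISTA for all k ≥ 0. -/
theorem acgm_guarantee_dominates_fista
    (L M : ℕ → ℝ)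
    (hLpos : ∀ k, 0 < L k) (hLM : ∀ k, L k ≤ M k)
    (hMmono : ∀ k, M k ≤ M (k + 1))
    (A B : ℕ → ℝ) (hA0 : A 0 = 0) (hB0 : B 0 = 0)
    (hArec : ∀ k, A (k + 1) =
      (Real.sqrt (1 / (4 * L (k + 1))) +
        Real.sqrt (1 / (4 * L (k + 1)) + A k)) ^ 2)
    (hBrec : ∀ k, B (k + 1) =
      (Real.sqrt (1 / (4 * M (k + 1))) +
        Real.sqrt (1 / (4 * M (k + 1)) + (M k / M (k + 1)) * B k)) ^ 2) :
    ∀ k, A k ≥ B k := by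
  have hMpos : ∀ k, 0 < M k := fun k => lt_of_lt_of_le (hLpos k) (hLM k)
  have key : ∀ k, 0 ≤ B k ∧ B k ≤ A k := by
    intro k
    induction k with
    | zero => simp [hA0, hB0]
    | succ k ih =>
      obtain ⟨hBnn, hBA⟩ := ih
      have hinv : (1 : ℝ) / (4 * M (k + 1)) ≤ 1 / (4 * L (k + 1)) := by
        apply one_div_le_one_div_of_le
        · have := hLpos (k+1); positivity
        · have := hLM (k + 1); have := hMmono k; nlinarith [hLpos (k+1)]
      have hratio : (M k / M (k + 1)) * B k ≤ A k := by
        have h1 : M k / M (k + 1) ≤ 1 := by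
          rw [div_le_one (hMpos (k + 1))]; exact hMmono k
        have h2 : (M k / M (k + 1)) * B k ≤ 1 * B k :=
          mul_le_mul_of_nonneg_right h1 hBnn
        linarith
      constructor
      · rw [hBrec k]; positivity
      · rw [hArec k, hBrec k]
        have hs1 : Real.sqrt (1 / (4 * M (k + 1))) ≤ Real.sqrt (1 / (4 * L (k + 1))) :=
          Real.sqrt_le_sqrt hinv
        have hs2 : Real.sqrt (1 / (4 * M (k + 1)) + (M k / M (k + 1)) * B k) ≤
            Real.sqrt (1 / (4 * L (k + 1)) + A k) := by
          apply Real.sqrt_le_sqrt; linarith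
        have hnn : 0 ≤ Real.sqrt (1 / (4 * M (k + 1))) +
            Real.sqrt (1 / (4 * M (k + 1)) + (M k / M (k + 1)) * B k) := by positivity
        exact pow_le_pow_left₀ hnn (by linarith) 2
  exact fun k => (key k).2
end
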